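/- The function H(x,y,z,E,B) = αz - αxE + (1/2)μ²E² + (1/2)B² is a first integral of the ODE system ẋ = -y, ẏ = x + zE, ż = -yE, Ė = B, Ḃ = αx - μ²E. -/

import Mathlib

theorem hasDerivAt_belobrov_energy {α μ x' z' E' B' t : ℝ} {x z E B : ℝ → ℝ}
    (hx : HasDerivAt x x' t) (hz : HasDerivAt z z' t) (hE : HasDerivAt E E' t)
    (hB : HasDerivAt B B' t) :
    HasDerivAt (fun s => α * z s - α * x s * E s + (1/2) * μ ^ 2 * E s ^ 2 + (1/2) * B s ^ 2)
      (α * z' - α * (x' * E t + x t * E') + μ ^ 2 * E t * E' + B t * B') t := by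
  refine ((((hz.const_mul α).fun_sub ((hx.const_mul α).fun_mul hE)).fun_add
      ((hE.fun_pow 2).const_mul ((1/2) * μ ^ 2))).fun_add
      ((hB.fun_pow 2).const_mul (1/2))).congr_deriv ?_
  push_cast
  ring

theorem H_first_integral_Belobrov (α μ : ℝ) (x y z E B : ℝ → ℝ)
    (hx : ∀ t, HasDerivAt x (-(y t)) t)
    (hz : ∀ t, HasDerivAt z (-(y t) * E t) t)
    (hE : ∀ t, HasDerivAt E (B t) t)
    (hB : ∀ t, HasDerivAt B (α * x t - μ ^ 2 * E t) t) :
    ∀ t, HasDerivAt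
      (fun s => α * z s - α * x s * E s + (1/2) * μ ^ 2 * E s ^ 2 + (1/2) * B s ^ 2) 0 t := by
  intro t
  convert hasDerivAt_belobrov_energy (hx t) (hz t) (hE t) (hB t) using 1
  ring
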